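/- arXiv:2311.02695 — 7 statements merged into one kernel-verified Lean document; each statement's English description precedes it below -/
import Mathlib

section
/- Let (Ω, F, P) be a probability space, η_1, …, η_d : Ω → ℝ jointly independent random variables, and Z_1, …, Z_d : Ω → ℝ random variables such that each Z_i is measurable with respect to the σ-algebra σ(η_1, …, η_i). Suppose there are coefficients α_1, …, α_d ∈ ℝ and an index s ∈ {1, …, d} with α_s ≠ 0 and α_k = 0 for all k > s, such that ∑_{k=1}^{d} α_k Z_k = 0 almost surely. Then Z_s is independent of η_s (as random variables under P). -/
open MeasureTheory ProbabilityTheory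

/-- Let `(Ω, F, P)` be a probability space, `η 1, …, η d` jointly
independent random variables and `Z 1, …, Z d` random variables such that each `Z i`
is measurable with respect to `σ(η 1, …, η i)`. Suppose there are coefficients
`α 1, …, α d` and an index `s` with `α s ≠ 0` and `α k = 0` for all `k > s`, such
that `∑ k, α k * Z k = 0` almost surely. Then `Z s` is independent of `η s`. -/
theorem indep_of_as_zero_linear_combination
    {Ω : Type*} [MeasurableSpace Ω] (P : Measure Ω) [IsProbabilityMeasure P]
    {d : ℕ} (η : Fin d → Ω → ℝ) (Z : Fin d → Ω → ℝ)
    (hηm : ∀ i, Measurable (η i))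
    (hη : iIndepFun η P)
    (hZm : ∀ i : Fin d,
      Measurable[⨆ k ∈ {k : Fin d | k ≤ i}, MeasurableSpace.comap (η k) inferInstance] (Z i))
    (α : Fin d → ℝ) (s : Fin d) (hαs : α s ≠ 0) (hαgt : ∀ k : Fin d, s < k → α k = 0)
    (hsum : ∀ᵐ ω ∂P, ∑ k, α k * Z k ω = 0) :
    IndepFun (Z s) (η s) P := by
  classical
  set m' : MeasurableSpace Ω :=
    ⨆ k ∈ {k : Fin d | k < s}, MeasurableSpace.comap (η k) inferInstance with hm'
  -- the candidate function
  set W : Ω → ℝ := fun ω => (α s)⁻¹ * -(∑ k ∈ Finset.univ.filter (· < s), α k * Z k ω)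
    with hW
  -- W is m'-measurable
  have hWm : Measurable[m'] W := by
    apply Measurable.const_mul
    apply Measurable.neg
    apply Finset.measurable_sum
    intro k hk
    simp only [Finset.mem_filter] at hk
    apply Measurable.const_mul
    refine (hZm k).mono ?_ le_rfl
    refine iSup₂_le fun j hj => ?_
    exact le_iSup₂ (f := fun j (_ : j ∈ {k : Fin d | k < s}) =>
      MeasurableSpace.comap (η j) inferInstance) j (lt_of_le_of_lt hj hk.2)
  -- Z s = W a.e.
  have hae : Z s =ᵐ[P] W := by
    filter_upwards [hsum] with ω hω
    have h1 : ∑ k, α k * Z k ω =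
        (∑ k ∈ Finset.univ.filter (· ≤ s), α k * Z k ω) +
        ∑ k ∈ Finset.univ.filter (¬ · ≤ s), α k * Z k ω :=
      (Finset.sum_filter_add_sum_filter_not _ _ _).symm
    have h2 : ∑ k ∈ Finset.univ.filter (¬ · ≤ s), α k * Z k ω = 0 := by
      apply Finset.sum_eq_zero
      intro k hk
      simp only [Finset.mem_filter, not_le] at hk
      rw [hαgt k hk.2, zero_mul]
    have h3 : Finset.univ.filter (· ≤ s) = insert s (Finset.univ.filter (· < s)) := by
      ext k
      simp [le_iff_lt_or_eq, or_comm]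
    have h4 : ∑ k ∈ Finset.univ.filter (· ≤ s), α k * Z k ω =
        α s * Z s ω + ∑ k ∈ Finset.univ.filter (· < s), α k * Z k ω := by
      rw [h3, Finset.sum_insert (by simp)]
    rw [h1, h2, h4] at hω
    simp only [hW]
    field_simp
    linarith
  -- independence of m' and σ(η s)
  have hind : Indep m' (MeasurableSpace.comap (η s) inferInstance) P := by
    have h := ProbabilityTheory.indep_iSup_of_disjoint
      (m := fun k => MeasurableSpace.comap (η k) inferInstance)
      (fun i => (hηm i).comap_le) ((iIndepFun_iff_iIndep _ _ _).mp hη)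
      (S := {k : Fin d | k < s}) (T := {s})
      (by simp [Set.disjoint_left]; exact fun a h => h.ne)
    simpa [hm'] using h
  have hWη : IndepFun W (η s) P := by
    rw [IndepFun_iff_Indep]
    exact fun t1 t2 h1 h2 => hind t1 t2 (hWm.comap_le _ h1) h2
  exact hWη.congr hae.symm (Filter.EventuallyEq.refl _ _)
end

section
/- Let (Ω, F, P) be a probability space, η_1, …, η_d : Ω → ℝ jointly independent random variables, and Z_1, …, Z_d : Ω → ℝ square-integrable random variables such that each Z_i is measurable with respect to σ(η_1, …, η_i) and, for every i, Z_i is not independent of η_i. Then for every invertible d × d real matrix L and every j ∈ {1, …, d}, the variance of (ZL)_j = ∑_{i=1}^{d} Z_i L_{i,j} is nonzero. -/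
open MeasureTheory ProbabilityTheory

/-- Non-vanishing variance under mixing. Let `η 1, …, η d` be jointly
independent random variables and `Z 1, …, Z d` square-integrable random variables such
that each `Z i` is measurable with respect to `σ(η 1, …, η i)` and no `Z i` is independent
of its own noise `η i`. Then for every invertible `d × d` real matrix `L` and every `j`,
the variance of `(Z L) j = ∑ i, Z i * L i j` is nonzero. -/
theorem variance_mixing_ne_zero
    {Ω : Type*} [MeasurableSpace Ω] (P : Measure Ω) [IsProbabilityMeasure P]
    {d : ℕ} (η : Fin d → Ω → ℝ) (Z : Fin d → Ω → ℝ)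
    (hηm : ∀ i, Measurable (η i))
    (hη : iIndepFun η P)
    (hZm : ∀ i : Fin d,
      Measurable[⨆ k ∈ {k : Fin d | k ≤ i}, MeasurableSpace.comap (η k) inferInstance] (Z i))
    (hZ2 : ∀ i, MemLp (Z i) 2 P)
    (hdeg : ∀ i, ¬ IndepFun (Z i) (η i) P)
    (L : Matrix (Fin d) (Fin d) ℝ) (hL : IsUnit L.det) :
    ∀ j : Fin d, variance (fun ω => ∑ i, Z i ω * L i j) P ≠ 0 := by
  intro j hvar
  -- the `j`-th column of `L` is nonzero
  have hcol : ∃ i, L i j ≠ 0 := by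
    by_contra h
    push_neg at h
    rw [Matrix.det_eq_zero_of_column_eq_zero j h] at hL
    simp at hL
  set s : Finset (Fin d) := Finset.univ.filter (fun i => L i j ≠ 0) with hs_def
  have hs : s.Nonempty := by
    obtain ⟨i, hi⟩ := hcol
    exact ⟨i, Finset.mem_filter.2 ⟨Finset.mem_univ _, hi⟩⟩
  set m : Fin d := s.max' hs with hm_def
  have hm : L m j ≠ 0 := (Finset.mem_filter.1 (s.max'_mem hs)).2
  have hmax : ∀ i : Fin d, m < i → L i j = 0 := by
    intro i hi
    by_contra h
    exact absurd (s.le_max' i (Finset.mem_filter.2 ⟨Finset.mem_univ _, h⟩)) (not_le.2 hi)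
  -- the mixed variable is a.e. constant
  set f : Ω → ℝ := fun ω => ∑ i, Z i ω * L i j with hf_def
  have hf2 : MemLp f 2 P := by
    rw [hf_def]
    apply memLp_finsetSum
    intro i _
    simpa [mul_comm] using (hZ2 i).const_mul (L i j)
  have hev : evariance f P = 0 := by
    have h1 : evariance f P ≠ ⊤ := hf2.evariance_lt_top.ne
    rw [variance] at hvar
    exact (ENNReal.toReal_eq_zero_iff _).1 hvar |>.resolve_right h1
  have hae : f =ᵐ[P] fun _ => P[f] :=
    (evariance_eq_zero_iff hf2.aestronglyMeasurable.aemeasurable).1 hev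
  set c : ℝ := P[f] with hc_def
  -- solve for `Z m`
  set W : Ω → ℝ := fun ω => (c - ∑ i ∈ Finset.univ.erase m, Z i ω * L i j) / L m j with hW_def
  have hZW : Z m =ᵐ[P] W := by
    filter_upwards [hae] with ω hω
    have hsum : Z m ω * L m j + ∑ i ∈ Finset.univ.erase m, Z i ω * L i j = c := by
      rw [Finset.add_sum_erase Finset.univ (fun i => Z i ω * L i j) (Finset.mem_univ m)]
      exact hω
    show Z m ω = (c - ∑ i ∈ Finset.univ.erase m, Z i ω * L i j) / L m j
    rw [eq_div_iff hm]
    linarith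
  -- `W` is measurable w.r.t. the σ-algebra generated by the noises other than `η m`
  set M' : MeasurableSpace Ω := ⨆ k ∈ ({m}ᶜ : Set (Fin d)), MeasurableSpace.comap (η k) inferInstance
    with hM'_def
  have hWm : Measurable[M'] W := by
    apply Measurable.div_const
    apply Measurable.const_sub
    apply Finset.measurable_sum
    intro i hi
    have hne : i ≠ m := Finset.ne_of_mem_erase hi
    rcases lt_or_gt_of_ne hne with hlt | hgt
    · have hZi : Measurable[M'] (Z i) := by
        refine (hZm i).mono ?_ le_rfl
        refine iSup₂_le fun k hk => ?_
        have : k ∈ ({m}ᶜ : Set (Fin d)) := by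
          simp only [Set.mem_compl_iff, Set.mem_singleton_iff]
          exact ne_of_lt (lt_of_le_of_lt hk hlt)
        exact le_biSup (fun k => MeasurableSpace.comap (η k) inferInstance) this
      exact hZi.mul_const _
    · have : (fun ω => Z i ω * L i j) = fun _ => (0 : ℝ) := by
        funext ω; rw [hmax i hgt, mul_zero]
      rw [this]
      exact measurable_const
  -- independence of `M'` and `σ(η m)`
  have hind : Indep M' (MeasurableSpace.comap (η m) inferInstance) P := by
    have h := indep_biSup_compl (fun k => (hηm k).comap_le) hη ({m}ᶜ)
    rw [compl_compl] at h
    exact indep_of_indep_of_le_right h (le_biSup (fun k => MeasurableSpace.comap (η k) inferInstance) (Set.mem_singleton m))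
  have hIW : IndepFun W (η m) P := indep_of_indep_of_le_left hind hWm.comap_le
  exact hdeg m (hIW.congr hZW.symm (Filter.EventuallyEq.refl _ _))
end

section
/- Let (Ω, F, P) be a probability space, η_1, …, η_d : Ω → ℝ jointly independent random variables, and Z_1, …, Z_d : Ω → ℝ square-integrable random variables such that each Z_i is measurable with respect to σ(η_1, …, η_i) and, for every i, Z_i is not independent of η_i. Then for every nonzero vector α ∈ ℝ^d, the variance of ∑_{i=1}^{d} α_i Z_i is nonzero. -/
open MeasureTheory ProbabilityTheory

private lemma indep_mono' {Ω : Type*} {mΩ : MeasurableSpace Ω} {μ : Measure Ω}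
    {m₁ m₂ m₁' m₂' : MeasurableSpace Ω} (h : Indep m₁ m₂ μ)
    (h1 : m₁' ≤ m₁) (h2 : m₂' ≤ m₂) : Indep m₁' m₂' μ := by
  rw [Indep_iff] at h ⊢
  exact fun t1 t2 ht1 ht2 => h t1 t2 (h1 _ ht1) (h2 _ ht2)

/-- Let `η 1, …, η d` be jointly independent random variables and
`Z 1, …, Z d` square-integrable random variables such that each `Z i` is measurable
with respect to `σ(η 1, …, η i)` and no `Z i` is independent of its own noise `η i`.
Then for every nonzero vector `α ∈ ℝ^d`, the variance of `∑ i, α i * Z i` is nonzero. -/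
theorem variance_linear_combination_ne_zero
    {Ω : Type*} [MeasurableSpace Ω] (P : Measure Ω) [IsProbabilityMeasure P]
    {d : ℕ} (η : Fin d → Ω → ℝ) (Z : Fin d → Ω → ℝ)
    (hηm : ∀ i, Measurable (η i))
    (hη : iIndepFun η P)
    (hZm : ∀ i : Fin d,
      Measurable[⨆ k ∈ {k : Fin d | k ≤ i}, MeasurableSpace.comap (η k) inferInstance] (Z i))
    (hZ2 : ∀ i, MemLp (Z i) 2 P)
    (hdeg : ∀ i, ¬ IndepFun (Z i) (η i) P)
    (α : Fin d → ℝ) (hα : α ≠ 0) :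
    variance (fun ω => ∑ i, α i * Z i ω) P ≠ 0 := by
  intro hv
  -- the largest index with a nonzero coefficient
  set s : Finset (Fin d) := Finset.univ.filter (fun k => α k ≠ 0) with hs
  have hsne : s.Nonempty := by
    obtain ⟨j, hj⟩ : ∃ j, α j ≠ 0 := by
      by_contra h
      push_neg at h
      exact hα (funext h)
    exact ⟨j, by simp [hs, hj]⟩
  set i : Fin d := s.max' hsne with hi
  have hαi : α i ≠ 0 := by
    have := s.max'_mem hsne
    simpa [hs] using this
  have hgt : ∀ k, i < k → α k = 0 := by
    intro k hk
    by_contra h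
    exact absurd (s.le_max' k (by simp [hs, h])) (not_le.mpr hk)
  -- the sum is square integrable
  set X : Ω → ℝ := fun ω => ∑ k, α k * Z k ω with hX
  have hX2 : MemLp X 2 P := by
    have h1 : MemLp (∑ k, fun ω => α k * Z k ω) 2 P :=
      memLp_finset_sum' _ (fun k _ => (hZ2 k).const_mul (α k))
    convert h1 using 1
    ext ω
    simp [hX]
  -- variance zero means a.e. constant
  have hvz : evariance X P = 0 := by
    have hlt := hX2.evariance_lt_top
    have h0 : (evariance X P).toReal = 0 := hv
    exact ((ENNReal.toReal_eq_zero_iff _).mp h0).resolve_right hlt.ne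
  have haeeq : X =ᵐ[P] fun _ => P[X] :=
    (evariance_eq_zero_iff hX2.aestronglyMeasurable.aemeasurable).mp hvz
  -- the σ-algebras
  set m : Fin d → MeasurableSpace Ω :=
    fun k => MeasurableSpace.comap (η k) inferInstance with hm
  have h_le : ∀ k, m k ≤ ‹MeasurableSpace Ω› := fun k => (hηm k).comap_le
  have hiIndep : iIndep m P := (iIndepFun_iff_iIndep _ _ _).mp hη
  have hdisj : Disjoint {k : Fin d | k < i} ({i} : Set (Fin d)) := by
    simp [Set.disjoint_singleton_right]
  have hindep : Indep (⨆ k ∈ {k : Fin d | k < i}, m k) (⨆ k ∈ ({i} : Set (Fin d)), m k) P :=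
    indep_iSup_of_disjoint h_le hiIndep hdisj
  -- define W
  set c : ℝ := P[X] with hc
  set W : Ω → ℝ :=
    fun ω => (c - ∑ k ∈ Finset.univ.filter (· < i), α k * Z k ω) / α i with hW
  have hWmeas : Measurable[⨆ k ∈ {k : Fin d | k < i}, m k] W := by
    apply Measurable.div_const
    apply Measurable.sub measurable_const
    apply Finset.measurable_sum
    intro k hk
    have hki : k < i := by simpa using hk
    apply Measurable.const_mul
    refine (hZm k).mono ?_ le_rfl
    exact iSup₂_mono' (fun j hj => ⟨j, lt_of_le_of_lt hj hki, le_rfl⟩)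
  have hIndepWη : IndepFun W (η i) P := by
    rw [IndepFun_iff_Indep]
    refine indep_mono' hindep ?_ ?_
    · exact hWmeas.comap_le
    · exact le_biSup m (Set.mem_singleton i)
  -- Z i is a.e. equal to W
  have hZW : Z i =ᵐ[P] W := by
    filter_upwards [haeeq] with ω hω
    have hsplit : ∑ k, α k * Z k ω
        = α i * Z i ω + ∑ k ∈ Finset.univ.erase i, α k * Z k ω :=
      (Finset.add_sum_erase _ _ (Finset.mem_univ i)).symm
    have hsum : ∑ k ∈ Finset.univ.erase i, α k * Z k ω
        = ∑ k ∈ Finset.univ.filter (· < i), α k * Z k ω := by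
      refine (Finset.sum_subset ?_ ?_).symm
      · intro k hk
        have hki : k < i := by simpa using hk
        simp [Finset.mem_erase, hki.ne]
      · intro k hk hk'
        have hki : k ≠ i := (Finset.mem_erase.mp hk).1
        have : ¬ k < i := by simpa using hk'
        have : i < k := lt_of_le_of_ne (not_lt.mp this) (Ne.symm hki)
        simp [hgt k this]
    have hXω : ∑ k, α k * Z k ω = c := hω
    rw [hsplit, hsum] at hXω
    rw [hW]
    field_simp
    linarith
  exact hdeg i (hIndepWη.congr hZW.symm (Filter.EventuallyEq.refl _ _))
end

section
/- Let (Ω, F, P) be a probability space, E a nonempty finite set of environments, and p : E → ℝ strictly positive weights. For each e ∈ E let Z^e : Ω → ℝ^d be a random vector with square-integrable coordinates, and set S^e := {j ∈ [d] : Var(Z^e_j) ≠ 0} and ‖Z^e‖ := #{j ∈ [d] : Var(Z^e_j) ≠ 0}. Assume: (i) for every e ∈ E and every nonzero β ∈ ℝ^d with β_i = 0 for all i ∉ S^e, Var(∑_{i=1}^{d} β_i Z^e_i) ≠ 0; and (ii) for every j ∈ [d], ⋃_{e ∈ E : j ∉ S^e} S^e = [d] \ {j}. Let L be a d × m real matrix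 (m ≥ d) whose rows are linearly independent, and suppose ∑_{e ∈ E} p_e · #{j ∈ [m] : Var((Z^e L)_j) ≠ 0} ≤ ∑_{e ∈ E} p_e · ‖Z^e‖. Then every column of L contains at most one nonzero entry, and at least d columns of L contain a nonzero entry. -/
open MeasureTheory ProbabilityTheory

section Aux

variable {Ω : Type*} [MeasurableSpace Ω] {P : Measure Ω}

private lemma aux_evariance_congr {X Y : Ω → ℝ} (h : X =ᵐ[P] Y) :
    evariance X P = evariance Y P := by
  have hI : (∫ ω, X ω ∂P) = ∫ ω, Y ω ∂P := integral_congr_ae h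
  rw [evariance, evariance, hI]
  apply lintegral_congr_ae
  filter_upwards [h] with ω hω
  rw [hω]

private lemma aux_variance_congr {X Y : Ω → ℝ} (h : X =ᵐ[P] Y) :
    variance X P = variance Y P := by
  rw [variance, variance, aux_evariance_congr h]

private lemma aux_variance_add_const [IsProbabilityMeasure P] {X : Ω → ℝ}
    (hX : Integrable X P) (c : ℝ) :
    variance (fun ω => X ω + c) P = variance X P := by
  have hI : (∫ ω, (X ω + c) ∂P) = (∫ ω, X ω ∂P) + c := by
    rw [integral_add hX (integrable_const c), integral_const]; simp
  rw [variance, variance, evariance, evariance, hI]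
  congr 1
  apply lintegral_congr
  intro ω
  have : X ω + c - ((∫ ω, X ω ∂P) + c) = X ω - ∫ ω, X ω ∂P := by ring
  rw [this]

private lemma aux_ae_const_of_variance_zero [IsProbabilityMeasure P] {X : Ω → ℝ}
    (hX : MemLp X 2 P) (h : variance X P = 0) :
    X =ᵐ[P] fun _ => ∫ ω, X ω ∂P := by
  have hlt := hX.evariance_lt_top
  have h0 : evariance X P = 0 := by
    rw [variance] at h
    rcases (ENNReal.toReal_eq_zero_iff _).mp h with h' | h'
    · exact h'
    · exact absurd h' hlt.ne
  exact (evariance_eq_zero_iff hX.aestronglyMeasurable.aemeasurable).mp h0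

/-- A linearly independent family of vectors in `Fin n → ℝ`, all supported on a set `T`,
has cardinality at most `T.ncard`. -/
private lemma aux_card_le_of_supported {n : ℕ} {ι : Type*} [Fintype ι]
    (v : ι → (Fin n → ℝ)) (hv : LinearIndependent ℝ v) (T : Set (Fin n))
    (hsupp : ∀ i j, j ∉ T → v i j = 0) :
    Fintype.card ι ≤ T.ncard := by
  classical
  letI : Fintype ↥T := (Set.toFinite T).fintype
  let r : (Fin n → ℝ) →ₗ[ℝ] (↥T → ℝ) := LinearMap.pi fun j => LinearMap.proj (j : Fin n)
  have hr : LinearIndependent ℝ (fun i => r (v i)) := by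
    rw [Fintype.linearIndependent_iff]
    intro g hg
    apply Fintype.linearIndependent_iff.mp hv g
    funext j
    by_cases hj : j ∈ T
    · have := congrFun hg ⟨j, hj⟩
      simpa [r, Finset.sum_apply] using this
    · simp [Finset.sum_apply, hsupp _ _ hj]
  have hle := hr.fintype_card_le_finrank
  rw [Module.finrank_fintype_fun_eq_card] at hle
  calc Fintype.card ι ≤ Fintype.card ↥T := hle
    _ = T.ncard := by rw [← Nat.card_eq_fintype_card, Nat.card_coe_set_eq]

end Aux

/-- Disentanglement via intervention sparsity, rectangular case.
Same setup as the square case, but `L` is a `d × m` matrix (`m ≥ d`) with linearly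
independent rows satisfying the variance-density sparsity constraint. Then every
column of `L` contains at most one nonzero entry, and at least `d` columns contain
a nonzero entry. -/
theorem disentanglement_via_intervention_sparsity_rect
    {Ω : Type*} [MeasurableSpace Ω] (P : Measure Ω) [IsProbabilityMeasure P]
    {E : Type*} [Fintype E] [Nonempty E] (p : E → ℝ) (hp : ∀ e, 0 < p e)
    {d m : ℕ} (hm : d ≤ m)
    (Z : E → Fin d → Ω → ℝ) (hZ2 : ∀ e i, MemLp (Z e i) 2 P)
    (S : E → Set (Fin d)) (hS : ∀ e, S e = {j | variance (Z e j) P ≠ 0})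
    (hmix : ∀ e, ∀ β : Fin d → ℝ, β ≠ 0 → (∀ i, i ∉ S e → β i = 0) →
      variance (fun ω => ∑ i, β i * Z e i ω) P ≠ 0)
    (hcov : ∀ j : Fin d, (⋃ e ∈ {e | j ∉ S e}, S e) = Set.univ \ {j})
    (L : Matrix (Fin d) (Fin m) ℝ) (hL : LinearIndependent ℝ (fun i : Fin d => L i))
    (hsparse :
      ∑ e : E, p e *
        (Set.ncard {j : Fin m | variance (fun ω => ∑ i, Z e i ω * L i j) P ≠ 0} : ℝ) ≤
      ∑ e : E, p e * (Set.ncard {j : Fin d | variance (Z e j) P ≠ 0} : ℝ)) :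
    (∀ j : Fin m, ∀ i i' : Fin d, L i j ≠ 0 → L i' j ≠ 0 → i = i') ∧
      d ≤ Set.ncard {j : Fin m | ∃ i : Fin d, L i j ≠ 0} := by
  classical
  -- the set of "active" columns in environment `e`
  set T : E → Set (Fin m) := fun e => {j | ∃ i ∈ S e, L i j ≠ 0} with hT
  -- Step A: variance of column `j` of `Z e * L` is nonzero iff `j ∈ T e`.
  have key : ∀ e (j : Fin m),
      variance (fun ω => ∑ i, Z e i ω * L i j) P ≠ 0 ↔ j ∈ T e := by
    intro e j
    set β : Fin d → ℝ := fun i => if i ∈ S e then L i j else 0 with hβ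
    set Y : Ω → ℝ := fun ω => ∑ i, β i * Z e i ω with hY
    set c : ℝ := ∑ i, (L i j - β i) * (∫ x, Z e i x ∂P) with hc
    have hYmem : MemLp Y 2 P :=
      memLp_finset_sum _ fun i _ => (hZ2 e i).const_mul (β i)
    have hzero : ∀ i : Fin d, ∀ᵐ ω ∂P, i ∉ S e → Z e i ω = ∫ x, Z e i x ∂P := by
      intro i
      by_cases hi : i ∈ S e
      · filter_upwards with ω h
        exact absurd hi h
      · have hv : variance (Z e i) P = 0 := by
          rw [hS e] at hi
          simpa using hi
        filter_upwards [aux_ae_const_of_variance_zero (hZ2 e i) hv] with ω hω _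
        exact hω
    have hae : (fun ω => ∑ i, Z e i ω * L i j) =ᵐ[P] fun ω => Y ω + c := by
      filter_upwards [ae_all_iff.2 hzero] with ω hω
      have hterm : ∀ i : Fin d,
          Z e i ω * L i j = β i * Z e i ω + (L i j - β i) * (∫ x, Z e i x ∂P) := by
        intro i
        by_cases hi : i ∈ S e
        · have : β i = L i j := if_pos hi
          rw [this]; ring
        · have h0 : β i = 0 := if_neg hi
          rw [h0, hω i hi]; ring
      calc ∑ i, Z e i ω * L i j
          = ∑ i, (β i * Z e i ω + (L i j - β i) * (∫ x, Z e i x ∂P)) :=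
            Finset.sum_congr rfl fun i _ => hterm i
        _ = Y ω + c := Finset.sum_add_distrib
    have hvarXY : variance (fun ω => ∑ i, Z e i ω * L i j) P = variance Y P := by
      rw [aux_variance_congr hae, aux_variance_add_const (hYmem.integrable one_le_two) c]
    rw [hvarXY]
    constructor
    · intro hvar
      by_contra hj
      have hβ0 : β = 0 := by
        funext i
        by_cases hi : i ∈ S e
        · have : L i j = 0 := by
            by_contra hLi
            exact hj ⟨i, hi, hLi⟩
          simp [hβ, hi, this]
        · simp [hβ, hi]
      apply hvar
      have : Y = fun _ => (0 : ℝ) := by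
        funext ω
        simp [hY, hβ0]
      rw [this]
      exact variance_zero P
    · rintro ⟨i, hiS, hiL⟩
      have hβne : β ≠ 0 := by
        intro h0
        apply hiL
        have := congrFun h0 i
        simpa [hβ, hiS] using this
      exact hmix e β hβne fun i hi => if_neg hi
  -- identify the two variance sets
  have hsetT : ∀ e, {j : Fin m | variance (fun ω => ∑ i, Z e i ω * L i j) P ≠ 0} = T e := by
    intro e
    ext j
    exact key e j
  have hsetS : ∀ e, {j : Fin d | variance (Z e j) P ≠ 0} = S e := fun e => (hS e).symm
  -- cardinality of `S e` as a subtype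
  have hfinS : ∀ e, Fintype ↥(S e) := fun e => (Set.toFinite (S e)).fintype
  -- Step B: `|S e| ≤ |T e|` for every `e`
  have hcard_le : ∀ e, (S e).ncard ≤ (T e).ncard := by
    intro e
    letI := hfinS e
    have hli : LinearIndependent ℝ (fun i : ↥(S e) => L (i : Fin d)) :=
      hL.comp _ Subtype.coe_injective
    have hsupp : ∀ (i : ↥(S e)) (j : Fin m), j ∉ T e → L (i : Fin d) j = 0 := by
      intro i j hj
      by_contra h
      exact hj ⟨(i : Fin d), i.2, h⟩
    have := aux_card_le_of_supported _ hli (T e) hsupp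
    rwa [← Nat.card_eq_fintype_card, Nat.card_coe_set_eq] at this
  -- From the sparsity constraint and positivity, equality holds.
  have hsparse' : ∑ e : E, p e * ((T e).ncard : ℝ) ≤ ∑ e : E, p e * ((S e).ncard : ℝ) := by
    simpa only [hsetT, hsetS] using hsparse
  have hcard_eq : ∀ e, (T e).ncard = (S e).ncard := by
    have hle : ∀ e ∈ Finset.univ, p e * ((S e).ncard : ℝ) ≤ p e * ((T e).ncard : ℝ) := by
      intro e _
      exact mul_le_mul_of_nonneg_left (by exact_mod_cast hcard_le e) (hp e).le
    have hsum_eq : ∑ e : E, p e * ((S e).ncard : ℝ) = ∑ e : E, p e * ((T e).ncard : ℝ) :=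
      le_antisymm (Finset.sum_le_sum hle) hsparse'
    intro e
    have := (Finset.sum_eq_sum_iff_of_le hle).mp hsum_eq e (Finset.mem_univ e)
    have h2 : ((S e).ncard : ℝ) = ((T e).ncard : ℝ) :=
      mul_left_cancel₀ (hp e).ne' this
    exact_mod_cast h2.symm
  -- representation of basis vectors of active columns
  have huniq : ∀ a b : Fin d → ℝ, (∑ k, a k • L k) = (∑ k, b k • L k) → a = b := by
    intro a b hab
    funext k
    have h0 : ∑ i, (a - b) i • L i = 0 := by
      simp only [Pi.sub_apply, sub_smul]
      rw [Finset.sum_sub_distrib, hab, sub_self]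
    have := Fintype.linearIndependent_iff.mp hL (a - b) h0 k
    have h2 : a k - b k = 0 := this
    linarith
  have hrep : ∀ e, ∀ j : Fin m, j ∈ T e →
      ∃ a : Fin d → ℝ, (∀ k, k ∉ S e → a k = 0) ∧ (∑ k, a k • L k) = Pi.single j (1 : ℝ) := by
    intro e j hj
    letI := hfinS e
    have hmem : (Pi.single j (1 : ℝ) : Fin m → ℝ) ∈
        Submodule.span ℝ (Set.range fun i : ↥(S e) => L (i : Fin d)) := by
      by_contra hnot
      have hli : LinearIndependent ℝ (fun i : ↥(S e) => L (i : Fin d)) :=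
        hL.comp _ Subtype.coe_injective
      have hopt := hli.option hnot
      have hsupp : ∀ (o : Option ↥(S e)) (j' : Fin m), j' ∉ T e →
          (Option.casesOn' o (Pi.single j (1 : ℝ)) (fun i : ↥(S e) => L (i : Fin d))) j' = 0 := by
        rintro (_ | i) j' hj'
        · have hne : j' ≠ j := by
            intro h
            exact hj' (h ▸ hj)
          simp [Option.casesOn', Pi.single_eq_of_ne hne]
        · by_contra h
          exact hj' ⟨(i : Fin d), i.2, h⟩
      have hcard := aux_card_le_of_supported _ hopt (T e) hsupp
      rw [Fintype.card_option] at hcard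
      have h1 : Fintype.card ↥(S e) = (S e).ncard := by
        rw [← Nat.card_eq_fintype_card, Nat.card_coe_set_eq]
      rw [h1, hcard_eq e] at hcard
      omega
    rcases (Submodule.mem_span_range_iff_exists_fun ℝ).mp hmem with ⟨cc, hcc⟩
    refine ⟨fun k => if h : k ∈ S e then cc ⟨k, h⟩ else 0, fun k hk => dif_neg hk, ?_⟩
    rw [← hcc]
    have h1 : ∑ k : Fin d, (if h : k ∈ S e then cc ⟨k, h⟩ else 0) • L k
        = ∑ k ∈ Finset.univ.filter (· ∈ S e), (if h : k ∈ S e then cc ⟨k, h⟩ else 0) • L k := by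
      symm
      apply Finset.sum_filter_of_ne
      intro k _ hk
      by_contra h
      simp [dif_neg h] at hk
    have h2 : ∑ k ∈ Finset.univ.filter (· ∈ S e), (if h : k ∈ S e then cc ⟨k, h⟩ else 0) • L k
        = ∑ i : ↥(S e), (if h : (i : Fin d) ∈ S e then cc ⟨(i : Fin d), h⟩ else 0) • L (i : Fin d) :=
      Finset.sum_subtype _ (by simp) _
    rw [h1, h2]
    apply Finset.sum_congr rfl
    intro i _
    rw [dif_pos i.2]
  -- coverage in convenient form
  have hcov' : ∀ i k : Fin d, i ≠ k → ∃ e, k ∉ S e ∧ i ∈ S e := by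
    intro i k hik
    have hmem : i ∈ Set.univ \ ({k} : Set (Fin d)) := ⟨trivial, by simpa using hik⟩
    rw [← hcov k] at hmem
    rcases Set.mem_iUnion₂.mp hmem with ⟨e, he, hie⟩
    exact ⟨e, he, hie⟩
  constructor
  · -- at most one nonzero entry per column
    intro j i i' hi hi'
    by_contra hne
    obtain ⟨e, hie, hi'e⟩ := hcov' i' i fun h => hne h.symm
    have hjT : j ∈ T e := ⟨i', hi'e, hi'⟩
    obtain ⟨a, haS, ha⟩ := hrep e j hjT
    have hAzero : ∀ k, a k = 0 := by
      intro k
      by_contra hak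
      have hkS : k ∈ S e := by
        by_contra hk
        exact hak (haS k hk)
      have hki : k ≠ i := fun h => hie (h ▸ hkS)
      obtain ⟨e'', hke, hie''⟩ := hcov' i k (Ne.symm hki)
      have hjT'' : j ∈ T e'' := ⟨i, hie'', hi⟩
      obtain ⟨b, hbS, hb⟩ := hrep e'' j hjT''
      have hab : a = b := huniq a b (ha.trans hb.symm)
      rw [hab] at hak
      exact hak (hbS k hke)
    have h0 : (∑ k, a k • L k) = 0 := by
      apply Finset.sum_eq_zero
      intro k _
      rw [hAzero k, zero_smul]
    have h1 : (Pi.single j (1 : ℝ) : Fin m → ℝ) = 0 := ha.symm.trans h0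
    have := congrFun h1 j
    simp at this
  · -- at least `d` active columns
    have hsupp : ∀ (i : Fin d) (j : Fin m), j ∉ {j : Fin m | ∃ i : Fin d, L i j ≠ 0} → L i j = 0 := by
      intro i j hj
      by_contra h
      exact hj ⟨i, h⟩
    have := aux_card_le_of_supported _ hL _ hsupp
    simpa using this
end

section
/- Let L be an invertible d × d real matrix and for each column j ∈ [d] let N_j := {i ∈ [d] : L_{i,j} ≠ 0}. Let 𝒮 be a nonempty finite family of subsets of [d] with strictly positive weights p : 𝒮 → ℝ, satisfying the coverage condition: for every j ∈ [d], ⋃_{S ∈ 𝒮 : j ∉ S} S = [d] \ {j}. If ∑_{S ∈ 𝒮} p(S) · #{j ∈ [d] : S ∩ N_j ≠ ∅} ≤ ∑_{S ∈ 𝒮} p(S) · #S, then there exists a permutation σ of [d] such that N_{σ(j)} = {j} for every j ∈ [d]; in particular every column of L contains exactly one nonzero entry. -/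
/-!
Since `det L ≠ 0`, some term of the Leibniz expansion is nonzero, giving a permutation `σ`
with `σ j ∈ N j` for every column `j`. Then `σ⁻¹ '' S` lies in the set of columns hit by `S`,
so `#S` never exceeds that count; the weighted inequality with positive weights forces
equality for every `S ∈ 𝒮`, i.e. `S` hits exactly the columns `σ⁻¹ '' S`. If some `k ≠ σ j`
lay in `N j`, coverage yields `S ∈ 𝒮` with `k ∈ S ∌ σ j`; this `S` hits column `j`, so
`σ j ∈ S`, a contradiction.
-/

theorem Matrix.exists_perm_forall_ne_zero_of_det_ne_zero {n R : Type*} [Fintype n]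
    [DecidableEq n] [CommRing R] {A : Matrix n n R} (hA : A.det ≠ 0) :
    ∃ σ : Equiv.Perm n, ∀ j, A (σ j) j ≠ 0 := by
  rw [Matrix.det_apply] at hA
  obtain ⟨σ, -, hσ⟩ := Finset.exists_ne_zero_of_sum_ne_zero hA
  refine ⟨σ, fun j hj => hσ ?_⟩
  rw [Finset.prod_eq_zero (f := fun i => A (σ i) i) (Finset.mem_univ j) hj, smul_zero]

theorem Finset.forall_eq_of_sum_mul_le {ι R : Type*} [CommRing R] [LinearOrder R]
    [IsStrictOrderedRing R] {s : Finset ι} {w f g : ι → R} (hw : ∀ i ∈ s, 0 < w i)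
    (hfg : ∀ i ∈ s, f i ≤ g i) (h : ∑ i ∈ s, w i * g i ≤ ∑ i ∈ s, w i * f i) :
    ∀ i ∈ s, f i = g i := by
  have hle : ∀ i ∈ s, w i * f i ≤ w i * g i := fun i hi =>
    mul_le_mul_of_nonneg_left (hfg i hi) (hw i hi).le
  have hterm := (Finset.sum_eq_sum_iff_of_le hle).mp (le_antisymm (Finset.sum_le_sum hle) h)
  exact fun i hi => mul_left_cancel₀ (hw i hi).ne' (hterm i hi)

section ColumnSupports

variable {ι α : Type*} {N : ι → Set α} {σ : ι ≃ α}

theorem image_symm_subset_setOf_inter_nonempty (hσ : ∀ j, σ j ∈ N j) (S : Set α) :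
    σ.symm '' S ⊆ {j | (S ∩ N j).Nonempty} := by
  rintro _ ⟨a, ha, rfl⟩
  exact ⟨a, ha, by simpa using hσ (σ.symm a)⟩

theorem ncard_le_ncard_setOf_inter_nonempty [Finite ι] (hσ : ∀ j, σ j ∈ N j) (S : Set α) :
    S.ncard ≤ {j | (S ∩ N j).Nonempty}.ncard := by
  rw [← Set.ncard_image_of_injective S σ.symm.injective]
  exact Set.ncard_le_ncard (image_symm_subset_setOf_inter_nonempty hσ S)

theorem setOf_inter_nonempty_eq_image_symm [Finite ι] (hσ : ∀ j, σ j ∈ N j) {S : Set α}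
    (hS : {j | (S ∩ N j).Nonempty}.ncard ≤ S.ncard) :
    {j | (S ∩ N j).Nonempty} = σ.symm '' S := by
  refine (Set.eq_of_subset_of_ncard_le (image_symm_subset_setOf_inter_nonempty hσ S) ?_).symm
  rwa [Set.ncard_image_of_injective S σ.symm.injective]

theorem eq_singleton_of_setOf_inter_nonempty_eq_image_symm {𝒮 : Set (Set α)}
    (hσ : ∀ j, σ j ∈ N j)
    (hcov : ∀ a : α, (⋃ S ∈ {S | S ∈ 𝒮 ∧ a ∉ S}, S) = Set.univ \ {a})
    (hhit : ∀ S ∈ 𝒮, {j | (S ∩ N j).Nonempty} = σ.symm '' S) (j : ι) :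
    N j = {σ j} := by
  refine Set.eq_singleton_iff_unique_mem.mpr ⟨hσ j, fun a ha => ?_⟩
  by_contra hne
  have ha' : a ∈ Set.univ \ {σ j} := ⟨Set.mem_univ a, hne⟩
  rw [← hcov (σ j), Set.mem_iUnion₂] at ha'
  obtain ⟨S, ⟨hS, hσjS⟩, haS⟩ := ha'
  have hj : j ∈ {j | (S ∩ N j).Nonempty} := ⟨a, haS, ha⟩
  rw [hhit S hS, Set.mem_image_equiv] at hj
  simp only [Equiv.symm_symm] at hj
  exact hσjS hj

end ColumnSupports

theorem column_supports_singleton_of_sparsity_general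
    {d : ℕ} (L : Matrix (Fin d) (Fin d) ℝ) (hL : L.det ≠ 0)
    (N : Fin d → Set (Fin d)) (hN : ∀ j : Fin d, N j = {i | L i j ≠ 0})
    (𝒮 : Finset (Set (Fin d)))
    (p : Set (Fin d) → ℝ) (hp : ∀ S ∈ 𝒮, 0 < p S)
    (hcov : ∀ j : Fin d, (⋃ S ∈ {S | S ∈ 𝒮 ∧ j ∉ S}, S) = Set.univ \ {j})
    (hineq : ∑ S ∈ 𝒮, p S * (Set.ncard {j : Fin d | (S ∩ N j).Nonempty} : ℝ) ≤
      ∑ S ∈ 𝒮, p S * (Set.ncard S : ℝ)) :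
    (∃ σ : Equiv.Perm (Fin d), ∀ j : Fin d, N (σ j) = {j}) ∧
      ∀ j : Fin d, ∃! i : Fin d, L i j ≠ 0 := by
  obtain ⟨σ, hσL⟩ := Matrix.exists_perm_forall_ne_zero_of_det_ne_zero hL
  have hσ : ∀ j, σ j ∈ N j := fun j => by rw [hN]; exact hσL j
  have hcard : ∀ S ∈ 𝒮, (S.ncard : ℝ) = {j | (S ∩ N j).Nonempty}.ncard :=
    Finset.forall_eq_of_sum_mul_le hp
      (fun S _ => by exact_mod_cast ncard_le_ncard_setOf_inter_nonempty hσ S) hineq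
  have hsingle : ∀ j, N j = {σ j} :=
    eq_singleton_of_setOf_inter_nonempty_eq_image_symm (𝒮 := ↑𝒮) hσ hcov
      fun S hS => setOf_inter_nonempty_eq_image_symm hσ (by exact_mod_cast (hcard S hS).ge)
  refine ⟨⟨σ.symm, fun j => by rw [hsingle, Equiv.apply_symm_apply]⟩, fun j => ⟨σ j, hσL j, ?_⟩⟩
  intro i hi
  have hi' : i ∈ N j := by rw [hN]; exact hi
  rwa [hsingle] at hi'

/-- Deterministic core of the disentanglement theorem. Let `L` be an
invertible `d × d` real matrix with column supports `N j = {i | L i j ≠ 0}`. Let `𝒮` be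
a nonempty finite family of subsets of `[d]` with strictly positive weights `p`,
satisfying the sufficient-coverage condition. If the weighted count of columns hit by
each `S` is at most the weighted count of elements of `S`, then there is a permutation
`σ` with `N (σ j) = {j}` for all `j`; in particular every column of `L` has exactly one
nonzero entry. -/
theorem column_supports_singleton_of_sparsity
    {d : ℕ} (L : Matrix (Fin d) (Fin d) ℝ) (hL : L.det ≠ 0)
    (N : Fin d → Set (Fin d)) (hN : ∀ j : Fin d, N j = {i | L i j ≠ 0})
    (𝒮 : Finset (Set (Fin d))) (h𝒮 : 𝒮.Nonempty)
    (p : Set (Fin d) → ℝ) (hp : ∀ S ∈ 𝒮, 0 < p S)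
    (hcov : ∀ j : Fin d, (⋃ S ∈ {S | S ∈ 𝒮 ∧ j ∉ S}, S) = Set.univ \ {j})
    (hineq : ∑ S ∈ 𝒮, p S * (Set.ncard {j : Fin d | (S ∩ N j).Nonempty} : ℝ) ≤
      ∑ S ∈ 𝒮, p S * (Set.ncard S : ℝ)) :
    (∃ σ : Equiv.Perm (Fin d), ∀ j : Fin d, N (σ j) = {j}) ∧
      ∀ j : Fin d, ∃! i : Fin d, L i j ≠ 0 :=
  column_supports_singleton_of_sparsity_general L hL N hN 𝒮 p hp hcov hineq
end

section
/- Let d ≥ 1, let σ be a permutation of [d], and let N : [d] → 𝒫([d]) be a function with j ∈ N(σ(j)) for every j ∈ [d]. Let 𝒮 be a family of subsets of [d] satisfying the coverage condition: for every j ∈ [d], ⋃_{S ∈ 𝒮 : j ∉ S} S = [d] \ {j}. Suppose that for every S ∈ 𝒮 and every j ∈ [d], if j ∉ S then N(σ(j)) ∩ S = ∅. Then N(σ(j)) = {j} for every j ∈ [d]. -/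
theorem Set.eq_singleton_of_mem_of_disjoint_cover {α : Type*} {j : α} {M : Set α}
    {𝒮 : Set (Set α)} (hj : j ∈ M) (hcov : {j}ᶜ ⊆ ⋃ S ∈ {S | S ∈ 𝒮 ∧ j ∉ S}, S)
    (hdisj : ∀ S ∈ 𝒮, j ∉ S → Disjoint M S) : M = {j} := by
  refine Set.eq_singleton_iff_unique_mem.mpr ⟨hj, fun k hk => ?_⟩
  by_contra hkj
  obtain ⟨S, ⟨hS, hjS⟩, hkS⟩ := Set.mem_iUnion₂.mp (hcov hkj)
  exact Set.disjoint_left.mp (hdisj S hS hjS) hk hkS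

theorem support_singleton_of_coverage_general
    {d : ℕ} (σ : Equiv.Perm (Fin d)) (N : Fin d → Set (Fin d))
    (hN : ∀ j : Fin d, j ∈ N (σ j)) (𝒮 : Set (Set (Fin d)))
    (hcov : ∀ j : Fin d, (⋃ S ∈ {S | S ∈ 𝒮 ∧ j ∉ S}, S) = Set.univ \ {j})
    (hdisj : ∀ S ∈ 𝒮, ∀ j : Fin d, j ∉ S → N (σ j) ∩ S = ∅) :
    ∀ j : Fin d, N (σ j) = {j} := fun j =>
  Set.eq_singleton_of_mem_of_disjoint_cover (hN j)
    (by rw [hcov j, Set.compl_eq_univ_sdiff])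
    fun S hS hjS => Set.disjoint_iff_inter_eq_empty.mpr (hdisj S hS j hjS)

/-- Let `σ` be a permutation of `[d]` and `N : [d] → 𝒫([d])` with
`j ∈ N (σ j)` for all `j`. Let `𝒮` be a family of subsets of `[d]` satisfying the
coverage condition `⋃ {S ∈ 𝒮 | j ∉ S} = [d] \ {j}` for each `j`. If for every `S ∈ 𝒮`
and every `j ∉ S` we have `N (σ j) ∩ S = ∅`, then `N (σ j) = {j}` for every `j`. -/
theorem support_singleton_of_coverage
    {d : ℕ} (hd : 1 ≤ d) (σ : Equiv.Perm (Fin d)) (N : Fin d → Set (Fin d))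
    (hN : ∀ j : Fin d, j ∈ N (σ j)) (𝒮 : Set (Set (Fin d)))
    (hcov : ∀ j : Fin d, (⋃ S ∈ {S | S ∈ 𝒮 ∧ j ∉ S}, S) = Set.univ \ {j})
    (hdisj : ∀ S ∈ 𝒮, ∀ j : Fin d, j ∉ S → N (σ j) ∩ S = ∅) :
    ∀ j : Fin d, N (σ j) = {j} :=
  support_singleton_of_coverage_general σ N hN 𝒮 hcov hdisj
end

section
/- Let (Ω, F, P) be a probability space and Z : Ω → ℝ^d a random vector with square-integrable coordinates. Set S := {i ∈ [d] : Var(Z_i) ≠ 0}, and assume that for every nonzero β ∈ ℝ^d with β_i = 0 for all i ∉ S, Var(∑_{i=1}^{d} β_i Z_i) ≠ 0. Then for every vector v ∈ ℝ^d, Var(∑_{i=1}^{d} Z_i v_i) ≠ 0 if and only if there exists i ∈ S with v_i ≠ 0. -/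
open MeasureTheory ProbabilityTheory

lemma evariance_congr' {Ω : Type*} [MeasurableSpace Ω] {P : Measure Ω}
    {X Y : Ω → ℝ} (h : X =ᵐ[P] Y) : evariance X P = evariance Y P := by
  unfold ProbabilityTheory.evariance
  rw [integral_congr_ae h]
  exact lintegral_congr_ae (h.mono fun ω hω => by simp [hω])

lemma variance_congr' {Ω : Type*} [MeasurableSpace Ω] {P : Measure Ω}
    {X Y : Ω → ℝ} (h : X =ᵐ[P] Y) : variance X P = variance Y P := by
  unfold ProbabilityTheory.variance
  rw [evariance_congr' h]

lemma variance_eq_zero_iff' {Ω : Type*} [MeasurableSpace Ω] {P : Measure Ω}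
    [IsProbabilityMeasure P] {X : Ω → ℝ} (hX : MemLp X 2 P) :
    variance X P = 0 ↔ X =ᵐ[P] fun _ => P[X] := by
  rw [← evariance_eq_zero_iff hX.1.aemeasurable, variance,
    ENNReal.toReal_eq_zero_iff]
  simp [hX.evariance_lt_top.ne]

lemma variance_add_const' {Ω : Type*} [MeasurableSpace Ω] {P : Measure Ω}
    [IsProbabilityMeasure P] (X : Ω → ℝ) (hX : Integrable X P) (c : ℝ) :
    variance (fun ω => X ω + c) P = variance X P := by
  unfold ProbabilityTheory.variance ProbabilityTheory.evariance
  congr 1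
  refine lintegral_congr fun ω => ?_
  rw [integral_add hX (integrable_const c), integral_const]
  congr 1
  simp

/-- Let `Z : Ω → ℝ^d` be a random vector with square-integrable
coordinates and `S := {i | Var(Z i) ≠ 0}`. Assume that for every nonzero `β` supported
on `S`, `Var(∑ i, β i * Z i) ≠ 0`. Then for every vector `v`,
`Var(∑ i, Z i * v i) ≠ 0` if and only if there is `i ∈ S` with `v i ≠ 0`. -/
theorem variance_mix_ne_zero_iff
    {Ω : Type*} [MeasurableSpace Ω] (P : Measure Ω) [IsProbabilityMeasure P]
    {d : ℕ} (Z : Fin d → Ω → ℝ) (hZ2 : ∀ i, MemLp (Z i) 2 P)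
    (S : Set (Fin d)) (hS : S = {i | variance (Z i) P ≠ 0})
    (hmix : ∀ β : Fin d → ℝ, β ≠ 0 → (∀ i, i ∉ S → β i = 0) →
      variance (fun ω => ∑ i, β i * Z i ω) P ≠ 0)
    (v : Fin d → ℝ) :
    variance (fun ω => ∑ i, Z i ω * v i) P ≠ 0 ↔ ∃ i ∈ S, v i ≠ 0 := by
  classical
  -- every non-S coordinate is a.s. constant
  have hconst : ∀ i : Fin d, i ∉ S → Z i =ᵐ[P] fun _ => P[Z i] := by
    intro i hi
    have : variance (Z i) P = 0 := by
      by_contra h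
      exact hi (hS ▸ h)
    exact (variance_eq_zero_iff' (hZ2 i)).mp this
  set β : Fin d → ℝ := fun i => if i ∈ S then v i else 0 with hβ
  set c : ℝ := ∑ i, if i ∈ S then 0 else P[Z i] * v i with hc
  -- a.e. equality of the two mixes
  have hae : (fun ω => ∑ i, Z i ω * v i) =ᵐ[P]
      (fun ω => (∑ i, β i * Z i ω) + c) := by
    have h : ∀ᵐ ω ∂P, ∀ i : Fin d, i ∉ S → Z i ω = P[Z i] := by
      rw [MeasureTheory.ae_all_iff]
      intro i
      by_cases hi : i ∈ S
      · simp [hi]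
      · filter_upwards [hconst i hi] with ω hω _ using hω
    filter_upwards [h] with ω hω
    rw [hc, ← Finset.sum_add_distrib]
    refine Finset.sum_congr rfl fun i _ => ?_
    by_cases hi : i ∈ S
    · simp [hβ, hi, mul_comm]
    · simp [hβ, hi, hω i hi]
  have hInt : Integrable (fun ω => ∑ i, β i * Z i ω) P := by
    apply integrable_finset_sum
    intro i _
    exact ((hZ2 i).integrable one_le_two).const_mul _
  have hvar : variance (fun ω => ∑ i, Z i ω * v i) P
      = variance (fun ω => ∑ i, β i * Z i ω) P := by
    rw [variance_congr' hae, variance_add_const' _ hInt]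
  constructor
  · intro h
    by_contra hcon
    push_neg at hcon
    apply h
    rw [hvar]
    have hβ0 : β = 0 := by
      funext i
      by_cases hi : i ∈ S
      · simp [hβ, hi, hcon i hi]
      · simp [hβ, hi]
    simp only [hβ0, Pi.zero_apply, zero_mul, Finset.sum_const_zero]
    exact variance_zero P
  · rintro ⟨i, hi, hvi⟩
    rw [hvar]
    refine hmix β ?_ ?_
    · intro h
      have := congrFun h i
      simp [hβ, hi] at this
      exact hvi this
    · intro j hj
      simp [hβ, hj]
end
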